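/- arXiv:1912.10462 — 3 statements merged into one kernel-verified Lean document; each statement's English description precedes it below -/
import Mathlib

section
/- For every unit vector β in ℝ^d and every integer H ≥ 1, there exists a non-zero integer vector a in ℤ^d such that ‖a‖ ≤ (4d−3)^{1/2} H^{d−1} and |a/‖a‖ − β| ≤ 2(4d²−7d+3)^{1/2}/(‖a‖ H). -/
/-!
Let `i₀` be a coordinate where `|β i|` is largest; replacing `β` by `-β` we may take `β i₀ > 0`.
Dirichlet's simultaneous approximation theorem (pigeonhole on the fractional parts of
`n * β j / β i₀`, `0 ≤ n ≤ H ^ (d - 1)`) yields `q ≤ H ^ (d - 1)` and integers `p j` with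
`|q * β j / β i₀ - p j| ≤ 1 / H` for `j ≠ i₀`. The lattice point with coordinates `q` at `i₀` and
`p j` elsewhere lies within `√(d - 1) / H` of the point `(q / β i₀) • β` of the ray through `β`,
and has norm at most `√(4d - 3) * q` because `|p j| ≤ 2q`. A nonzero vector `v` at distance `δ`
from that ray has direction within `2δ / ‖v‖` of `β`.
-/

open Finset

theorem exists_nat_forall_abs_mul_sub_le {ι : Type*} [Fintype ι] (θ : ι → ℝ) {H : ℕ}
    (hH : 0 < H) :
    ∃ q : ℕ, 0 < q ∧ q ≤ H ^ Fintype.card ι ∧ ∃ p : ι → ℤ, ∀ i, |q * θ i - p i| ≤ 1 / H := by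
  classical
  have hH' : (0 : ℝ) < H := mod_cast hH
  let cell : ℕ → ι → ℤ := fun n i => ⌊Int.fract (n * θ i) * H⌋
  have hmaps : ∀ n ∈ range (H ^ Fintype.card ι + 1),
      cell n ∈ Fintype.piFinset fun _ => Ico (0 : ℤ) H := by
    intro n _
    simp only [Fintype.mem_piFinset, mem_Ico, cell, Int.floor_nonneg, Int.floor_lt]
    intro i
    exact ⟨by positivity, by
      push_cast; exact mul_lt_of_lt_one_left hH' (Int.fract_lt_one _)⟩
  have hcard :
      #(Fintype.piFinset fun _ : ι => Ico (0 : ℤ) H) < #(range (H ^ Fintype.card ι + 1)) := by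
    simp
  obtain ⟨m, hm, n, hn, hne, hmn⟩ := exists_ne_map_eq_of_card_lt_of_maps_to hcard hmaps
  wlog hlt : m < n generalizing m n
  · exact this n hn m hm hne.symm hmn.symm (by omega)
  refine ⟨n - m, by omega, by rw [mem_range] at hn; omega, fun i => ⌊n * θ i⌋ - ⌊m * θ i⌋,
    fun i => ?_⟩
  have hclose := Int.abs_sub_lt_one_of_floor_eq_floor (congrFun hmn i)
  rw [← sub_mul, abs_mul, abs_of_pos hH', ← lt_div_iff₀ hH'] at hclose
  calc |((n - m : ℕ) : ℝ) * θ i - ((⌊n * θ i⌋ - ⌊m * θ i⌋ : ℤ) : ℝ)|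
      = |Int.fract (m * θ i) - Int.fract (n * θ i)| := by
        rw [abs_sub_comm]; simp only [Int.fract, Nat.cast_sub hlt.le]; push_cast; ring_nf
    _ ≤ 1 / H := hclose.le

theorem norm_inv_norm_smul_sub_le {E : Type*} [NormedAddCommGroup E] [NormedSpace ℝ E]
    {v β : E} (hv : v ≠ 0) (hβ : ‖β‖ = 1) {t : ℝ} (ht : 0 ≤ t) :
    ‖‖v‖⁻¹ • v - β‖ ≤ 2 * ‖v - t • β‖ / ‖v‖ := by
  have hv' : 0 < ‖v‖ := norm_pos_iff.mpr hv
  have hscale : |t - ‖v‖| ≤ ‖v - t • β‖ := by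
    simpa [norm_smul, hβ, abs_of_nonneg ht, norm_sub_rev] using abs_norm_sub_norm_le (t • β) v
  have hsplit : ‖v‖⁻¹ • v - β = ‖v‖⁻¹ • ((v - t • β) + (t - ‖v‖) • β) := by
    rw [smul_add, smul_smul, mul_sub, inv_mul_cancel₀ hv'.ne', sub_smul, one_smul, smul_sub,
      smul_smul]
    abel
  calc ‖‖v‖⁻¹ • v - β‖ ≤ ‖v‖⁻¹ * (‖v - t • β‖ + |t - ‖v‖|) := by
        rw [hsplit, norm_smul, norm_inv, norm_norm]
        gcongr
        exact (norm_add_le _ _).trans_eq (by rw [norm_smul, hβ, mul_one, Real.norm_eq_abs])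
    _ ≤ 2 * ‖v - t • β‖ / ‖v‖ := by
        rw [inv_mul_eq_div]; gcongr; linarith

theorem EuclideanSpace.norm_le_of_abs_apply_le {ι : Type*} [Fintype ι] {x : EuclideanSpace ℝ ι}
    {i₀ : ι} {A B C : ℝ} (hA : |x i₀| ≤ A) (hB : ∀ j ≠ i₀, |x j| ≤ B)
    (hC : A ^ 2 + (Fintype.card ι - 1) * B ^ 2 ≤ C ^ 2) (hC₀ : 0 ≤ C) : ‖x‖ ≤ C := by
  classical
  rw [← pow_le_pow_iff_left₀ (norm_nonneg x) hC₀ two_ne_zero, EuclideanSpace.norm_sq_eq,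
    ← add_sum_erase _ _ (mem_univ i₀)]
  refine (add_le_add (pow_le_pow_left₀ (norm_nonneg _) hA 2)
    (sum_le_card_nsmul _ _ (B ^ 2) fun j hj =>
      pow_le_pow_left₀ (norm_nonneg _) (hB j (ne_of_mem_erase hj)) 2)).trans ?_
  rwa [card_erase_of_mem (mem_univ i₀), card_univ, nsmul_eq_mul,
      Nat.cast_sub (Fintype.card_pos_iff.mpr ⟨i₀⟩), Nat.cast_one]

def latticePoint {ι : Type*} (a : ι → ℤ) : EuclideanSpace ℝ ι :=
  WithLp.toLp 2 fun i => (a i : ℝ)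

@[simp]
theorem latticePoint_apply {ι : Type*} (a : ι → ℤ) (i : ι) : latticePoint a i = a i := rfl

@[simp]
theorem latticePoint_neg {ι : Type*} (a : ι → ℤ) : latticePoint (-a) = -latticePoint a := by
  ext i; simp

theorem latticePoint_ne_zero {ι : Type*} {a : ι → ℤ} (ha : a ≠ 0) : latticePoint a ≠ 0 := by
  contrapose! ha
  ext i
  simpa using congrArg (· i) ha

section NearRay

variable {ι : Type*} [Fintype ι] {β : EuclideanSpace ℝ ι} {i₀ : ι} {H : ℕ}

theorem exists_latticePoint_near_ray_of_pos (h₀ : 0 < β i₀) (hmax : ∀ j, |β j| ≤ β i₀)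
    (hH : 0 < H) :
    ∃ (a : ι → ℤ) (t : ℝ), a ≠ 0 ∧ 0 ≤ t ∧
      ‖latticePoint a - t • β‖ ≤ √(Fintype.card ι - 1) / H ∧
      ‖latticePoint a‖ ≤ √(4 * Fintype.card ι - 3) * (H : ℝ) ^ (Fintype.card ι - 1) := by
  classical
  have hH' : (0 : ℝ) < H := mod_cast hH
  have hcard : (1 : ℝ) ≤ Fintype.card ι := mod_cast Fintype.card_pos_iff.mpr ⟨i₀⟩
  obtain ⟨q, hq, hqH, p, hp⟩ :=
    exists_nat_forall_abs_mul_sub_le (fun j : {j // j ≠ i₀} => β j / β i₀) hH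
  rw [Fintype.card_subtype_compl, Fintype.card_subtype_eq] at hqH
  set a : ι → ℤ := fun j => if h : j = i₀ then q else p ⟨j, h⟩
  have ha₀ : a i₀ = q := dif_pos rfl
  have ha : ∀ j (h : j ≠ i₀), a j = p ⟨j, h⟩ := fun j h => dif_neg h
  have hround : ∀ j (h : j ≠ i₀), |(a j : ℝ) - q / β i₀ * β j| ≤ 1 / H := fun j h => by
    rw [ha j h, abs_sub_comm, div_mul_comm, mul_comm]; exact hp ⟨j, h⟩
  have hbound : ∀ j (h : j ≠ i₀), |(a j : ℝ)| ≤ 2 * q := fun j h => by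
    have hratio : |q / β i₀ * β j| ≤ q := by
      rw [abs_mul, abs_div, Nat.abs_cast, abs_of_pos h₀, div_mul_eq_mul_div, mul_div_assoc]
      exact mul_le_of_le_one_right (Nat.cast_nonneg q) ((div_le_one h₀).mpr (hmax j))
    have : (1 : ℝ) / H ≤ q := (div_le_one hH').mpr (mod_cast hH) |>.trans (mod_cast hq)
    linarith [abs_sub_abs_le_abs_sub (a j : ℝ) (q / β i₀ * β j), hround j h]
  refine ⟨a, q / β i₀, fun h => hq.ne' (by simpa [ha₀] using congrFun h i₀),
    by positivity, ?_, ?_⟩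
  · refine EuclideanSpace.norm_le_of_abs_apply_le (i₀ := i₀) (A := 0) (B := 1 / H) ?_
      (fun j h => ?_) ?_ (by positivity)
    · simp [ha₀, h₀.ne']
    · simpa using hround j h
    · rw [div_pow, div_pow, Real.sq_sqrt (by linarith)]
      exact le_of_eq (by ring)
  · calc ‖latticePoint a‖ ≤ √(4 * Fintype.card ι - 3) * q := by
          refine EuclideanSpace.norm_le_of_abs_apply_le (i₀ := i₀) (A := q) (B := 2 * q)
            (by simp [ha₀]) (fun j h => by simpa using hbound j h) ?_ (by positivity)
          rw [mul_pow, mul_pow, Real.sq_sqrt (by linarith)]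
          exact le_of_eq (by ring)
      _ ≤ _ := by gcongr; exact_mod_cast hqH

theorem exists_latticePoint_near_ray (h₀ : β i₀ ≠ 0) (hmax : ∀ j, |β j| ≤ |β i₀|) (hH : 0 < H) :
    ∃ (a : ι → ℤ) (t : ℝ), a ≠ 0 ∧ 0 ≤ t ∧
      ‖latticePoint a - t • β‖ ≤ √(Fintype.card ι - 1) / H ∧
      ‖latticePoint a‖ ≤ √(4 * Fintype.card ι - 3) * (H : ℝ) ^ (Fintype.card ι - 1) := by
  rcases h₀.lt_or_gt with hneg | hpos
  · obtain ⟨a, t, ha, ht, happrox, hnorm⟩ := exists_latticePoint_near_ray_of_pos (β := -β)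
      (by simpa using hneg) (by simpa [abs_of_neg hneg] using hmax) hH
    refine ⟨-a, t, neg_ne_zero.mpr ha, ht, ?_, by simpa using hnorm⟩
    rwa [latticePoint_neg, show -latticePoint a - t • β = -(latticePoint a - t • -β) by module,
      norm_neg]
  · exact exists_latticePoint_near_ray_of_pos hpos (by simpa [abs_of_pos hpos] using hmax) hH

end NearRay

theorem dirichlet_direction_general {d : ℕ} (β : EuclideanSpace ℝ (Fin d))
    (hβ : ‖β‖ = 1) (H : ℕ) (hH : 1 ≤ H) :
    ∃ (a : Fin d → ℤ) (av : EuclideanSpace ℝ (Fin d)),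
      a ≠ 0 ∧ (∀ i, av i = (a i : ℝ)) ∧
      ‖av‖ ≤ Real.sqrt (4 * d - 3) * (H : ℝ) ^ (d - 1) ∧
      ‖‖av‖⁻¹ • av - β‖ ≤ 2 * Real.sqrt (4 * d ^ 2 - 7 * d + 3) / (‖av‖ * H) := by
  obtain ⟨j, hj⟩ : ∃ j, β j ≠ 0 := by
    by_contra! h
    exact one_ne_zero (hβ.symm.trans (by simp [show β = 0 from PiLp.ext h]))
  have : Nonempty (Fin d) := ⟨j⟩
  obtain ⟨i₀, hi₀⟩ := Finite.exists_max fun i => |β i|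
  have h₀ : β i₀ ≠ 0 := abs_pos.mp ((abs_pos.mpr hj).trans_le (hi₀ j))
  obtain ⟨a, t, ha, ht, happrox, hnorm⟩ := exists_latticePoint_near_ray h₀ hi₀ hH
  rw [Fintype.card_fin] at happrox hnorm
  refine ⟨a, latticePoint a, ha, fun i => rfl, hnorm, ?_⟩
  calc ‖‖latticePoint a‖⁻¹ • latticePoint a - β‖
      ≤ 2 * ‖latticePoint a - t • β‖ / ‖latticePoint a‖ :=
        norm_inv_norm_smul_sub_le (latticePoint_ne_zero ha) hβ ht
    _ ≤ 2 * (√(d - 1) / H) / ‖latticePoint a‖ := by gcongr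
    _ = 2 * √(d - 1) / (‖latticePoint a‖ * H) := by ring
    _ ≤ 2 * √(4 * d ^ 2 - 7 * d + 3) / (‖latticePoint a‖ * H) := by
        gcongr; nlinarith [sq_nonneg ((d : ℝ) - 1)]

theorem dirichlet_direction {d : ℕ} (hd : 1 ≤ d) (β : EuclideanSpace ℝ (Fin d))
    (hβ : ‖β‖ = 1) (H : ℕ) (hH : 1 ≤ H) :
    ∃ (a : Fin d → ℤ) (av : EuclideanSpace ℝ (Fin d)),
      a ≠ 0 ∧ (∀ i, av i = (a i : ℝ)) ∧
      ‖av‖ ≤ Real.sqrt (4 * d - 3) * (H : ℝ) ^ (d - 1) ∧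
      ‖‖av‖⁻¹ • av - β‖ ≤ 2 * Real.sqrt (4 * d ^ 2 - 7 * d + 3) / (‖av‖ * H) :=
  dirichlet_direction_general β hβ H hH
end

section
/- Let β ∈ ℝ^d be a unit vector with s rational quotients, 1 ≤ s ≤ d−2, and let H ≥ 1 be an integer. Then there exists a non-zero a ∈ ℤ^d and a constant C(β) > 0 (depending only on β, not on H) such that ‖a‖ ≤ C(β) H^{d−1−s} and |a/‖a‖ − β| ≤ C(β)/(‖a‖H). -/
/-!
Multiplying `β` by a large `t` makes its `s + 1` coordinates with rational quotients integers.
Dirichlet's simultaneous approximation theorem (pigeonhole on fractional parts) applied to the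
other `d - 1 - s` coordinates of `t • β` gives `q ≤ H ^ (d - 1 - s)` and an integer vector `a`
with `|a i - q t β i| ≤ 1 / H` for all `i`, so `‖a - q t β‖ ≤ √d / H`; normalising `a` at most
doubles this error relative to `‖a‖`.
-/

theorem exists_nat_le_pow_forall_abs_mul_sub_int_le {ι : Type*} [Finite ι] (θ : ι → ℝ)
    {H : ℕ} (hH : 0 < H) :
    ∃ q : ℕ, 0 < q ∧ q ≤ H ^ Nat.card ι ∧ ∀ i, ∃ p : ℤ, |q * θ i - p| ≤ 1 / H := by
  classical
  have := Fintype.ofFinite ι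
  have hH' : (0 : ℝ) < H := by exact_mod_cast hH
  let box (m : ℕ) (i : ι) : Fin H :=
    ⟨⌊Int.fract (m * θ i) * H⌋₊, (Nat.floor_lt' hH.ne').2 <|
      mul_lt_of_lt_one_left hH' (Int.fract_lt_one _)⟩
  obtain ⟨m, m', hne, hbox⟩ : ∃ m m' : Fin (H ^ Nat.card ι + 1), m ≠ m' ∧ box m = box m' :=
    Fintype.exists_ne_map_eq_of_card_lt (fun m : Fin _ => box m) <| by
      simp [Nat.card_eq_fintype_card]
  wlog hlt : m < m' generalizing m m'
  · exact this m' m hne.symm hbox.symm (lt_of_le_of_ne (not_lt.1 hlt) hne.symm)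
  refine ⟨m' - m, by omega, by omega, fun i => ⟨⌊m' * θ i⌋ - ⌊m * θ i⌋, ?_⟩⟩
  have hfloor : ⌊Int.fract (m' * θ i) * H⌋ = ⌊Int.fract (m * θ i) * H⌋ := by
    have := congrArg Fin.val (congrFun hbox i)
    rw [← Int.natCast_floor_eq_floor (by positivity), ← Int.natCast_floor_eq_floor (by positivity)]
    exact_mod_cast this.symm
  have key : (↑(m' - m : ℕ) : ℝ) * θ i - ↑(⌊m' * θ i⌋ - ⌊m * θ i⌋)
      = (Int.fract (m' * θ i) * H - Int.fract (m * θ i) * H) / H := by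
    rw [Nat.cast_sub hlt.le]
    simp only [Int.fract]
    field_simp
    push_cast
    ring
  rw [key, abs_div, abs_of_pos hH']
  exact div_le_div_of_nonneg_right (Int.abs_sub_lt_one_of_floor_eq_floor hfloor).le hH'.le

theorem exists_pos_nat_mul_eq_int {ι : Type*} [Finite ι] {x : ι → ℝ}
    (hx : ∀ i, ∃ q : ℚ, x i = q) : ∃ D : ℕ, 0 < D ∧ ∀ i, ∃ z : ℤ, D * x i = z := by
  have := Fintype.ofFinite ι
  choose q hq using hx
  refine ⟨∏ i, (q i).den, Finset.prod_pos fun i _ => (q i).den_pos, fun i => ?_⟩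
  obtain ⟨c, hc⟩ := Finset.dvd_prod_of_mem (fun i => (q i).den) (Finset.mem_univ i)
  refine ⟨c * (q i).num, ?_⟩
  have hnum := congrArg ((↑) : ℚ → ℝ) (Rat.den_mul_eq_num (q i))
  push_cast at hnum
  rw [hc, hq, Int.cast_mul, ← hnum]
  push_cast
  ring

theorem EuclideanSpace.norm_le_sqrt_card_mul {ι : Type*} [Fintype ι] (x : EuclideanSpace ℝ ι)
    {ε : ℝ} (hε : 0 ≤ ε) (h : ∀ i, |x i| ≤ ε) : ‖x‖ ≤ √(Fintype.card ι) * ε := by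
  rw [EuclideanSpace.norm_eq, ← Real.sqrt_sq hε, ← Real.sqrt_mul (Nat.cast_nonneg _)]
  gcongr
  calc ∑ i, ‖x i‖ ^ 2 ≤ ∑ _i : ι, ε ^ 2 :=
        Finset.sum_le_sum fun i _ => pow_le_pow_left₀ (norm_nonneg _) (h i) 2
    _ = _ := by simp

theorem exists_ge_forall_mul_eq_int {ι : Type*} [Finite ι] {f : ι → ℝ} {S : Set ι} {k : ℝ}
    (hk : k ≠ 0) (hS : ∀ i ∈ S, ∃ q : ℚ, k * f i = q) (B : ℝ) :
    ∃ t, B ≤ t ∧ ∀ i ∈ S, ∃ z : ℤ, t * f i = z := by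
  have habs : ∀ i : S, ∃ q : ℚ, |k| * f i = q := fun ⟨i, hi⟩ => by
    obtain ⟨q, hq⟩ := hS i hi
    rcases abs_choice k with h | h <;> rw [h]
    · exact ⟨q, hq⟩
    · exact ⟨-q, by push_cast; rw [← hq]; ring⟩
  obtain ⟨D, hD, hDz⟩ := exists_pos_nat_mul_eq_int habs
  have hDk : 0 < D * |k| := by positivity
  obtain ⟨N, hN⟩ := exists_nat_ge (B / (D * |k|))
  refine ⟨N * (D * |k|), (div_le_iff₀ hDk).1 hN, fun i hi => ?_⟩
  obtain ⟨z, hz⟩ := hDz ⟨i, hi⟩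
  exact ⟨N * z, by push_cast; rw [← hz]; ring⟩

theorem exists_nat_le_pow_forall_abs_int_sub_mul_le {ι : Type*} [Finite ι] {θ : ι → ℝ}
    {S : Set ι} (hS : ∀ i ∈ S, ∃ z : ℤ, θ i = z) {H : ℕ} (hH : 0 < H) :
    ∃ q : ℕ, 0 < q ∧ q ≤ H ^ Sᶜ.ncard ∧ ∃ a : ι → ℤ, ∀ i, |a i - q * θ i| ≤ 1 / H := by
  classical
  obtain ⟨q, hq, hqH, hp⟩ :=
    exists_nat_le_pow_forall_abs_mul_sub_int_le (fun i : ↥Sᶜ => θ i) hH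
  choose p hp using hp
  choose z hz using hS
  refine ⟨q, hq, by rwa [← Nat.card_coe_set_eq],
    fun i => if hi : i ∈ S then q * z i hi else p ⟨i, hi⟩, fun i => ?_⟩
  by_cases hi : i ∈ S
  · simp [hi, hz]
  · simpa only [dif_neg hi, abs_sub_comm] using hp ⟨i, hi⟩

theorem exists_nat_le_pow_norm_intCast_sub_smul_le {ι : Type*} [Fintype ι]
    {θ : EuclideanSpace ℝ ι} {S : Set ι} (hS : ∀ i ∈ S, ∃ z : ℤ, θ i = z) {H : ℕ} (hH : 0 < H) :
    ∃ q : ℕ, 0 < q ∧ q ≤ H ^ Sᶜ.ncard ∧ ∃ a : ι → ℤ,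
      ‖WithLp.toLp 2 (fun i => (a i : ℝ)) - (q : ℝ) • θ‖ ≤ √(Fintype.card ι) / H := by
  obtain ⟨q, hq, hqH, a, ha⟩ := exists_nat_le_pow_forall_abs_int_sub_mul_le hS hH
  refine ⟨q, hq, hqH, a, ?_⟩
  simpa [div_eq_mul_inv] using EuclideanSpace.norm_le_sqrt_card_mul _ (ε := 1 / H)
    (by positivity) fun i => by simpa using ha i

theorem norm_inv_norm_smul_sub_le_s12 {E : Type*} [NormedAddCommGroup E] [NormedSpace ℝ E]
    {x b : E} (hx : x ≠ 0) (hb : ‖b‖ = 1) {w : ℝ} (hw : 0 ≤ w) :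
    ‖‖x‖⁻¹ • x - b‖ ≤ 2 * ‖x - w • b‖ / ‖x‖ := by
  have hx' : 0 < ‖x‖ := norm_pos_iff.2 hx
  have hwb : ‖w • b‖ = w := by rw [norm_smul, hb, mul_one, Real.norm_of_nonneg hw]
  have hradial : ‖w • b - ‖x‖ • b‖ ≤ ‖x - w • b‖ :=
    calc ‖w • b - ‖x‖ • b‖ = |‖w • b‖ - ‖x‖| := by
          rw [← sub_smul, norm_smul, hb, mul_one, Real.norm_eq_abs, hwb]
      _ ≤ ‖w • b - x‖ := abs_norm_sub_norm_le _ _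
      _ = ‖x - w • b‖ := norm_sub_rev _ _
  have hsplit : ‖‖x‖⁻¹ • x - b‖ = ‖x - ‖x‖ • b‖ / ‖x‖ := by
    rw [show ‖x‖⁻¹ • x - b = ‖x‖⁻¹ • (x - ‖x‖ • b) by
      rw [smul_sub, smul_smul, inv_mul_cancel₀ hx'.ne', one_smul],
      norm_smul, norm_inv, norm_norm, inv_mul_eq_div]
  rw [hsplit]
  gcongr
  linarith [norm_sub_le_norm_sub_add_norm_sub x (w • b) (‖x‖ • b)]

theorem rational_quotients_dirichlet_general {d s : ℕ}
    (β : EuclideanSpace ℝ (Fin d)) (hβ : ‖β‖ = 1)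
    (hrat : ∃ k : ℝ, k ≠ 0 ∧
      Set.ncard {i : Fin d | ∃ q : ℚ, k * β i = (q : ℝ)} = s + 1) :
    ∃ C : ℝ, 0 < C ∧ ∀ H : ℕ, 1 ≤ H →
      ∃ (a : Fin d → ℤ) (av : EuclideanSpace ℝ (Fin d)),
        a ≠ 0 ∧ (∀ i, av i = (a i : ℝ)) ∧
        ‖av‖ ≤ C * (H : ℝ) ^ (d - 1 - s) ∧
        ‖‖av‖⁻¹ • av - β‖ ≤ C / (‖av‖ * H) := by
  obtain ⟨k, hk, hcard⟩ := hrat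
  set S := {i : Fin d | ∃ q : ℚ, k * β i = (q : ℝ)}
  have hcompl : Sᶜ.ncard = d - 1 - s := by
    rw [Set.ncard_compl, hcard, Nat.card_eq_fintype_card, Fintype.card_fin]
    omega
  -- `t ≥ √d + 1` keeps `a` away from `0`.
  obtain ⟨t, ht, htS⟩ := exists_ge_forall_mul_eq_int (f := β) (S := S) hk (fun i hi => hi) (√d + 1)
  have ht0 : 0 ≤ t := by linarith [Real.sqrt_nonneg d]
  refine ⟨t + 2 * √d, by linarith [Real.sqrt_nonneg d], fun H hH => ?_⟩
  obtain ⟨q, hq, hqH, a, hδ⟩ :=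
    exists_nat_le_pow_norm_intCast_sub_smul_le (θ := t • β) htS hH
  set av : EuclideanSpace ℝ (Fin d) := WithLp.toLp 2 fun i => (a i : ℝ)
  rw [smul_smul, Fintype.card_fin] at hδ
  have hH' : (1 : ℝ) ≤ H := by exact_mod_cast hH
  have hqt : t ≤ q * t := le_mul_of_one_le_left ht0 (by exact_mod_cast hq)
  have hδ1 : √d / H ≤ √d := div_le_self (Real.sqrt_nonneg _) hH'
  have hwβ : ‖(q * t) • β‖ = q * t := by
    rw [norm_smul, hβ, mul_one, Real.norm_of_nonneg (by positivity)]
  have hav : 1 ≤ ‖av‖ := by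
    linarith [norm_sub_norm_le ((q * t) • β) av, norm_sub_rev av ((q * t) • β)]
  have hav0 : av ≠ 0 := norm_pos_iff.1 (by linarith)
  refine ⟨a, av, fun h => hav0 (by ext i; simp [av, h]), fun i => rfl, ?_, ?_⟩
  · have hqH' : (q : ℝ) ≤ (H : ℝ) ^ (d - 1 - s) := by rw [← hcompl]; exact_mod_cast hqH
    have hpow : 1 ≤ (H : ℝ) ^ (d - 1 - s) := one_le_pow₀ hH'
    calc ‖av‖ ≤ q * t + √d := by linarith [norm_le_norm_add_norm_sub' av ((q * t) • β)]
      _ ≤ H ^ (d - 1 - s) * t + √d * H ^ (d - 1 - s) := by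
          gcongr
          exact le_mul_of_one_le_right (Real.sqrt_nonneg _) hpow
      _ ≤ (t + 2 * √d) * H ^ (d - 1 - s) := by nlinarith [Real.sqrt_nonneg d]
  · calc ‖‖av‖⁻¹ • av - β‖ ≤ 2 * ‖av - (q * t) • β‖ / ‖av‖ :=
          norm_inv_norm_smul_sub_le_s12 hav0 hβ (by positivity)
      _ ≤ 2 * (√d / H) / ‖av‖ := by gcongr
      _ = 2 * √d / (‖av‖ * H) := by field_simp
      _ ≤ (t + 2 * √d) / (‖av‖ * H) := by gcongr; linarith

theorem rational_quotients_dirichlet {d s : ℕ} (hs1 : 1 ≤ s) (hs2 : s ≤ d - 2) (hd : 2 ≤ d)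
    (β : EuclideanSpace ℝ (Fin d)) (hβ : ‖β‖ = 1)
    (hrat : ∃ k : ℝ, k ≠ 0 ∧
      Set.ncard {i : Fin d | ∃ q : ℚ, k * β i = (q : ℝ)} = s + 1)
    (hmax : ∀ k : ℝ, k ≠ 0 →
      Set.ncard {i : Fin d | ∃ q : ℚ, k * β i = (q : ℝ)} ≤ s + 1) :
    ∃ C : ℝ, 0 < C ∧ ∀ H : ℕ, 1 ≤ H →
      ∃ (a : Fin d → ℤ) (av : EuclideanSpace ℝ (Fin d)),
        a ≠ 0 ∧ (∀ i, av i = (a i : ℝ)) ∧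
        ‖av‖ ≤ C * (H : ℝ) ^ (d - 1 - s) ∧
        ‖‖av‖⁻¹ • av - β‖ ≤ C / (‖av‖ * H) :=
  rational_quotients_dirichlet_general β hβ hrat
end

section
/- Let R > 0, let β be a unit vector in ℝ^d, let S be the spherical segment on RS^{d−1} of direction β with cap radii r₂ < r₁ ≤ 2R, and let a ∈ ℤ^d be non-zero making angle φ with β, where δ = 2 sin(φ/2) satisfies Rδ ≤ r₂. Then S is contained in the spherical segment S' of direction a/‖a‖ with cap radii r₂' = r₂ − Rδ and r₁' = (r₁² + 2Rr₁δ + R²δ²)^{1/2}, and the height of S' equals h' = (r₁'² − r₂'²)/(2R) = (r₁² − r₂²)/(2R) + δ(r₁ + r₂). -/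
/-!
Moving the direction from `β` to `γ = a/‖a‖` moves the centre `R • β` of every cap by `R * δ`,
so by the triangle inequality a cap of radius `r` about `R • β` lies in the cap of radius
`r + R * δ` about `R • γ`, and the cap of radius `r - R * δ` about `R • γ` lies in the cap of
radius `r` about `R • β`. The height identity is `(r₁ + Rδ)² - (r₂ - Rδ)² = r₁² - r₂² + 2Rδ(r₁ + r₂)`.
-/

section SphericalSegment

variable {E : Type*} [SeminormedAddCommGroup E] [NormedSpace ℝ E]

def sphericalCap (R : ℝ) (γ : E) (r : ℝ) : Set E := {x | ‖x‖ = R ∧ ‖x - R • γ‖ ≤ r}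

def sphericalSegment (R : ℝ) (γ : E) (r₁ r₂ : ℝ) : Set E :=
  sphericalCap R γ r₁ \ sphericalCap R γ r₂

noncomputable def segmentHeight (R ρ₁ ρ₂ : ℝ) : ℝ := (ρ₁ ^ 2 - ρ₂ ^ 2) / (2 * R)

theorem sphericalCap_subset_sphericalCap {R r r' : ℝ} {γ γ' : E}
    (h : r + ‖R • γ - R • γ'‖ ≤ r') : sphericalCap R γ r ⊆ sphericalCap R γ' r' :=
  fun x ⟨hx, hxr⟩ =>
    ⟨hx, (norm_sub_le_norm_sub_add_norm_sub x (R • γ) (R • γ')).trans (by linarith)⟩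

theorem sphericalSegment_subset_sphericalSegment {R r₁ r₂ δ : ℝ} {γ γ' : E} (hR : 0 ≤ R)
    (hγ : ‖γ - γ'‖ ≤ δ) :
    sphericalSegment R γ r₁ r₂ ⊆ sphericalSegment R γ' (r₁ + R * δ) (r₂ - R * δ) := by
  have hshift : ‖R • γ - R • γ'‖ ≤ R * δ := by
    rw [← smul_sub, norm_smul, Real.norm_of_nonneg hR]
    exact mul_le_mul_of_nonneg_left hγ hR
  refine Set.sdiff_subset_sdiff (sphericalCap_subset_sphericalCap (by linarith))
    (sphericalCap_subset_sphericalCap ?_)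
  rw [norm_sub_rev]
  linarith

end SphericalSegment

theorem segmentHeight_add_sub {R : ℝ} (hR : R ≠ 0) (r₁ r₂ δ : ℝ) :
    segmentHeight R (r₁ + R * δ) (r₂ - R * δ) = segmentHeight R r₁ r₂ + δ * (r₁ + r₂) := by
  unfold segmentHeight
  field_simp
  ring

theorem segment_covered_by_rational_segment_general {d : ℕ} (R r1 r2 δ : ℝ) (hR : 0 < R)
    (hr21 : r2 < r1)
    (β : EuclideanSpace ℝ (Fin d))
    (av : EuclideanSpace ℝ (Fin d))
    (hδ : δ = ‖β - ‖av‖⁻¹ • av‖) (hδr : R * δ ≤ r2) :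
    (({x : EuclideanSpace ℝ (Fin d) | ‖x‖ = R ∧ ‖x - R • β‖ ≤ r1} \
      {x : EuclideanSpace ℝ (Fin d) | ‖x‖ = R ∧ ‖x - R • β‖ ≤ r2}) ⊆
     ({x : EuclideanSpace ℝ (Fin d) | ‖x‖ = R ∧
        ‖x - R • (‖av‖⁻¹ • av)‖ ≤ Real.sqrt (r1 ^ 2 + 2 * R * r1 * δ + R ^ 2 * δ ^ 2)} \
      {x : EuclideanSpace ℝ (Fin d) | ‖x‖ = R ∧
        ‖x - R • (‖av‖⁻¹ • av)‖ ≤ r2 - R * δ})) ∧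
    ((Real.sqrt (r1 ^ 2 + 2 * R * r1 * δ + R ^ 2 * δ ^ 2) ^ 2 - (r2 - R * δ) ^ 2) / (2 * R)
      = (r1 ^ 2 - r2 ^ 2) / (2 * R) + δ * (r1 + r2)) := by
  have hδ0 : 0 ≤ δ := hδ ▸ norm_nonneg _
  have hr1 : 0 ≤ r1 + R * δ := by linarith [mul_nonneg hR.le hδ0]
  have hsqrt : Real.sqrt (r1 ^ 2 + 2 * R * r1 * δ + R ^ 2 * δ ^ 2) = r1 + R * δ := by
    rw [show r1 ^ 2 + 2 * R * r1 * δ + R ^ 2 * δ ^ 2 = (r1 + R * δ) ^ 2 by ring, Real.sqrt_sq hr1]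
  rw [hsqrt]
  exact ⟨sphericalSegment_subset_sphericalSegment hR.le hδ.ge,
    segmentHeight_add_sub hR.ne' r1 r2 δ⟩

theorem segment_covered_by_rational_segment {d : ℕ} (R r1 r2 δ : ℝ) (hR : 0 < R)
    (hr2 : 0 ≤ r2) (hr21 : r2 < r1) (hr1 : r1 ≤ 2 * R)
    (β : EuclideanSpace ℝ (Fin d)) (hβ : ‖β‖ = 1)
    (a : Fin d → ℤ) (ha : a ≠ 0)
    (av : EuclideanSpace ℝ (Fin d)) (hav : ∀ i, av i = (a i : ℝ))
    (hδ : δ = ‖β - ‖av‖⁻¹ • av‖) (hδr : R * δ ≤ r2) :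
    (({x : EuclideanSpace ℝ (Fin d) | ‖x‖ = R ∧ ‖x - R • β‖ ≤ r1} \
      {x : EuclideanSpace ℝ (Fin d) | ‖x‖ = R ∧ ‖x - R • β‖ ≤ r2}) ⊆
     ({x : EuclideanSpace ℝ (Fin d) | ‖x‖ = R ∧
        ‖x - R • (‖av‖⁻¹ • av)‖ ≤ Real.sqrt (r1 ^ 2 + 2 * R * r1 * δ + R ^ 2 * δ ^ 2)} \
      {x : EuclideanSpace ℝ (Fin d) | ‖x‖ = R ∧
        ‖x - R • (‖av‖⁻¹ • av)‖ ≤ r2 - R * δ})) ∧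
    ((Real.sqrt (r1 ^ 2 + 2 * R * r1 * δ + R ^ 2 * δ ^ 2) ^ 2 - (r2 - R * δ) ^ 2) / (2 * R)
      = (r1 ^ 2 - r2 ^ 2) / (2 * R) + δ * (r1 + r2)) :=
  segment_covered_by_rational_segment_general R r1 r2 δ hR hr21 β av hδ hδr
end
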